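/- arXiv:1303.6029 — 2 statements merged into one kernel-verified Lean document; each statement's English description precedes it below -/
import Mathlib

section
/- Suppose $\phi$ is harmonic in $\Omega_t$ and $P$ solves $-P = \partial_t\phi + \frac12|\nabla_{x,y}\phi|^2 + gy$ where additionally $\partial_t\phi + \nabla_{x,y}\phi$ obey the water-wave system. Then the material derivative $\dot P = (\partial_t + \nabla_{x,y}\phi\cdot\nabla_{x,y})P$ satisfies $\Delta_{x,y}\dot P = 4\nabla^2_{x,y}\phi : \nabla^2_{x,y}P + 2\sum_{i,j,k}(\partial_i\partial_j\phi)(\partial_i\partial_k\phi)(\partial_j\partial_k\phi)$ in $\Omega_t$, where indices $i,j,k$ run over all $d+1$ variables $(x,y)$. -/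
open MeasureTheory Real
open scoped ENNReal

noncomputable section

/-- Euclidean space `ℝ^n`. -/
abbrev Vd (d : ℕ) := EuclideanSpace ℝ (Fin d)

/-- Spatial partial derivative `∂_i` (over the `d+1` variables `(x,y)`) of a function of
time and space. -/
def spD {n : ℕ} (i : Fin n) (f : ℝ × Vd n → ℝ) : ℝ × Vd n → ℝ :=
  fun q => fderiv ℝ f q ((0 : ℝ), EuclideanSpace.single i 1)

/-- Time derivative `∂_t` of a function of time and space. -/
def tD {n : ℕ} (f : ℝ × Vd n → ℝ) : ℝ × Vd n → ℝ :=
  fun q => fderiv ℝ f q ((1 : ℝ), (0 : Vd n))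

namespace WWHelp
variable {E : Type*} [NormedAddCommGroup E] [NormedSpace ℝ E]

/-- Directional derivative. -/
def Dv (v : E) (f : E → ℝ) : E → ℝ := fun q => fderiv ℝ f q v

variable {U : Set E} {q : E} {f g : E → ℝ}

lemma contDiffOn_Dv (hU : IsOpen U) (hf : ContDiffOn ℝ (⊤ : ℕ∞) f U) (v : E) :
    ContDiffOn ℝ (⊤ : ℕ∞) (Dv v f) U := by
  have h1 : ContDiffOn ℝ (⊤ : ℕ∞) (fun x => fderiv ℝ f x) U := hf.fderiv_of_isOpen hU (by simp)
  exact (ContinuousLinearMap.apply ℝ ℝ v).contDiff.comp_contDiffOn h1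

lemma diffAt (hU : IsOpen U) (hf : ContDiffOn ℝ (⊤ : ℕ∞) f U) (hq : q ∈ U) :
    DifferentiableAt ℝ f q :=
  (hf.contDiffAt (hU.mem_nhds hq)).differentiableAt (by simp)

lemma Dv_congr (hU : IsOpen U) (h : ∀ x ∈ U, f x = g x) (hq : q ∈ U) (v : E) :
    Dv v f q = Dv v g q := by
  have h' : f =ᶠ[nhds q] g := Filter.eventually_of_mem (hU.mem_nhds hq) h
  simp only [Dv, h'.fderiv_eq]

lemma Dv_comm (hU : IsOpen U) (hf : ContDiffOn ℝ (⊤ : ℕ∞) f U) (hq : q ∈ U) (v w : E) :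
    Dv v (Dv w f) q = Dv w (Dv v f) q := by
  have hfa : ContDiffAt ℝ (⊤ : ℕ∞) f q := hf.contDiffAt (hU.mem_nhds hq)
  have hd : DifferentiableAt ℝ (fderiv ℝ f) q :=
    (hfa.fderiv_right (m := 1) (WithTop.coe_le_coe.mpr le_top)).differentiableAt one_ne_zero
  have key : ∀ u u' : E, Dv u (Dv u' f) q = fderiv ℝ (fderiv ℝ f) q u u' := by
    intro u u'
    have : fderiv ℝ (fun y => fderiv ℝ f y u') q
        = (fderiv ℝ (fderiv ℝ f) q).flip u' := by
      have := fderiv_clm_apply (c := fderiv ℝ f) (u := fun _ => u') hd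
        (differentiableAt_const _)
      simpa using this
    show fderiv ℝ (fun y => fderiv ℝ f y u') q u = _
    rw [this]
    rfl
  rw [key, key]
  exact (hfa.isSymmSndFDerivAt (by rw [minSmoothness_of_isRCLikeNormedField]; exact WithTop.coe_le_coe.mpr le_top)) v w

lemma Dv_add (hf : DifferentiableAt ℝ f q) (hg : DifferentiableAt ℝ g q) (v : E) :
    Dv v (fun x => f x + g x) q = Dv v f q + Dv v g q := by
  simp only [Dv, fderiv_fun_add hf hg]; rfl

lemma Dv_neg (v : E) : Dv v (fun x => -f x) q = -Dv v f q := by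
  simp only [Dv, fderiv_fun_neg]; rfl

lemma Dv_mul (hf : DifferentiableAt ℝ f q) (hg : DifferentiableAt ℝ g q) (v : E) :
    Dv v (fun x => f x * g x) q = Dv v f q * g q + f q * Dv v g q := by
  simp only [Dv, fderiv_fun_mul hf hg]
  simp [mul_comm]
  ring

lemma Dv_const_mul (hf : DifferentiableAt ℝ f q) (c : ℝ) (v : E) :
    Dv v (fun x => c * f x) q = c * Dv v f q := by
  simp only [Dv, fderiv_const_mul hf c]; rfl

lemma Dv_sum {ι : Type*} {s : Finset ι} {A : ι → E → ℝ}
    (h : ∀ i ∈ s, DifferentiableAt ℝ (A i) q) (v : E) :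
    Dv v (fun x => ∑ i ∈ s, A i x) q = ∑ i ∈ s, Dv v (A i) q := by
  simp only [Dv, fderiv_fun_sum h, ContinuousLinearMap.coe_sum', Finset.sum_apply]

lemma Dv_const (c : ℝ) (v : E) : Dv v (fun _ => c) q = 0 := by
  simp [Dv]

/-- Commute the outer two of three directional derivatives. -/
lemma Dv_comm3_12 (hU : IsOpen U) (hf : ContDiffOn ℝ (⊤ : ℕ∞) f U) (hq : q ∈ U) (u1 u2 u3 : E) :
    Dv u1 (Dv u2 (Dv u3 f)) q = Dv u2 (Dv u1 (Dv u3 f)) q :=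
  Dv_comm hU (contDiffOn_Dv hU hf u3) hq u1 u2

/-- Commute the inner two of three directional derivatives. -/
lemma Dv_comm3_23 (hU : IsOpen U) (hf : ContDiffOn ℝ (⊤ : ℕ∞) f U) (hq : q ∈ U) (u1 u2 u3 : E) :
    Dv u1 (Dv u2 (Dv u3 f)) q = Dv u1 (Dv u3 (Dv u2 f)) q :=
  Dv_congr hU (fun x hx => Dv_comm hU hf hx u2 u3) hq u1

end WWHelp

open WWHelp

/-- Spatial direction vectors. -/
def sv {n : ℕ} (i : Fin n) : ℝ × Vd n := ((0 : ℝ), EuclideanSpace.single i 1)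

/-- Time direction vector. -/
def tv (n : ℕ) : ℝ × Vd n := ((1 : ℝ), (0 : Vd n))

lemma spD_eq {n : ℕ} (i : Fin n) (f : ℝ × Vd n → ℝ) : spD i f = Dv (sv i) f := rfl

lemma tD_eq {n : ℕ} (f : ℝ × Vd n → ℝ) : tD f = Dv (tv n) f := rfl

/-- If `φ` is harmonic (in the `d+1` space variables) and
`-P = ∂_t φ + ½|∇φ|² + g y` (Bernoulli), then the material derivative
`Ṗ = (∂_t + ∇φ·∇)P` satisfies
`ΔṖ = 4 ∇²φ : ∇²P + 2 ∑_{i,j,k} (∂_i∂_jφ)(∂_i∂_kφ)(∂_j∂_kφ)`. -/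
theorem material_pressure_laplacian (d : ℕ) (g : ℝ)
    (Φ P : ℝ × Vd (d + 1) → ℝ) (U : Set (ℝ × Vd (d + 1))) (hU : IsOpen U)
    (hΦ : ContDiffOn ℝ (⊤ : ℕ∞) Φ U) (hP : ContDiffOn ℝ (⊤ : ℕ∞) P U)
    (hharm : ∀ q ∈ U, ∑ i, spD i (spD i Φ) q = 0)
    (hbern : ∀ q ∈ U,
      P q = -(tD Φ q + (1 / 2) * ∑ i, (spD i Φ q) ^ 2 + g * q.2 (Fin.last d))) :
    ∀ q ∈ U,
      (∑ i, spD i (spD i (fun r => tD P r + ∑ j, spD j Φ r * spD j P r)) q) =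
        4 * (∑ i, ∑ j, spD i (spD j Φ) q * spD i (spD j P) q) +
          2 * ∑ i, ∑ j, ∑ k, spD i (spD j Φ) q * spD i (spD k Φ) q * spD j (spD k Φ) q := by
  simp only [spD_eq, tD_eq] at *
  set w : ℝ × Vd (d+1) := tv (d+1) with hw
  -- differentiability / smoothness toolkit
  have dA : ∀ {f : ℝ × Vd (d+1) → ℝ}, ContDiffOn ℝ (⊤ : ℕ∞) f U → ∀ {x}, x ∈ U →
      DifferentiableAt ℝ f x := fun {_} hf {_} hx => diffAt hU hf hx
  have sD : ∀ {f : ℝ × Vd (d+1) → ℝ}, ContDiffOn ℝ (⊤ : ℕ∞) f U →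
      ∀ u, ContDiffOn ℝ (⊤ : ℕ∞) (Dv u f) U := fun hf u => contDiffOn_Dv hU hf u
  have sF1 : ∀ u, ContDiffOn ℝ (⊤ : ℕ∞) (Dv u Φ) U := sD hΦ
  have sF2 : ∀ u u', ContDiffOn ℝ (⊤ : ℕ∞) (Dv u (Dv u' Φ)) U := fun u u' => sD (sF1 u') u
  have sP1 : ∀ u, ContDiffOn ℝ (⊤ : ℕ∞) (Dv u P) U := sD hP
  have sP2 : ∀ u u', ContDiffOn ℝ (⊤ : ℕ∞) (Dv u (Dv u' P)) U := fun u u' => sD (sP1 u') u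
  -- the coordinate function
  have hLd : ∀ (u x : ℝ × Vd (d+1)), Dv u (fun r : ℝ × Vd (d+1) => g * r.2 (Fin.last d)) x
      = g * u.2 (Fin.last d) := by
    intro u x
    set pL : (ℝ × Vd (d+1)) →L[ℝ] ℝ :=
      (EuclideanSpace.proj (Fin.last d)).comp (ContinuousLinearMap.snd ℝ ℝ (Vd (d+1))) with hpL
    have hpLval : ∀ r : ℝ × Vd (d+1), pL r = r.2 (Fin.last d) := fun r => rfl
    have h1 : (fun r : ℝ × Vd (d+1) => g * r.2 (Fin.last d)) = fun r => g * pL r := by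
      funext r; rw [hpLval]
    rw [h1, Dv_const_mul pL.differentiableAt g]
    show g * (fderiv ℝ pL x) u = _
    rw [pL.fderiv, hpLval]
  have hLdiff : ∀ x : ℝ × Vd (d+1),
      DifferentiableAt ℝ (fun r : ℝ × Vd (d+1) => g * r.2 (Fin.last d)) x := by
    intro x
    set pL : (ℝ × Vd (d+1)) →L[ℝ] ℝ :=
      (EuclideanSpace.proj (Fin.last d)).comp (ContinuousLinearMap.snd ℝ ℝ (Vd (d+1))) with hpL
    exact pL.differentiableAt.const_mul g
  -- harmonicity consequences
  have hH1 : ∀ (u : ℝ × Vd (d+1)), ∀ x ∈ U, ∑ i, Dv u (Dv (sv i) (Dv (sv i) Φ)) x = 0 := by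
    intro u x hx
    rw [← Dv_sum (fun i _ => dA (sF2 (sv i) (sv i)) hx) u]
    rw [Dv_congr hU (g := fun _ => (0:ℝ)) hharm hx u]
    exact Dv_const 0 u
  have hH2 : ∀ (k : Fin (d+1)), ∀ x ∈ U,
      ∑ i, Dv (sv i) (Dv (sv i) (Dv (sv k) Φ)) x = 0 := by
    intro k x hx
    have e : ∀ i : Fin (d+1), Dv (sv i) (Dv (sv i) (Dv (sv k) Φ)) x
        = Dv (sv k) (Dv (sv i) (Dv (sv i) Φ)) x := by
      intro i
      rw [Dv_comm3_23 hU hΦ hx, Dv_comm3_12 hU hΦ hx]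
    rw [Finset.sum_congr rfl fun i _ => e i]
    exact hH1 (sv k) x hx
  have hC3 : ∀ (u1 u2 u3 : ℝ × Vd (d+1)), ∀ x ∈ U,
      Dv u1 (Dv u2 (Dv u3 Φ)) x = Dv u2 (Dv u3 (Dv u1 Φ)) x := by
    intro u1 u2 u3 x hx
    rw [Dv_comm3_12 hU hΦ hx, Dv_comm3_23 hU hΦ hx]
  -- Bernoulli in product form
  have hbern2 : ∀ x ∈ U, P x = -(Dv w Φ x
      + (1/2) * ∑ k, Dv (sv k) Φ x * Dv (sv k) Φ x + g * x.2 (Fin.last d)) := by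
    intro x hx
    rw [hbern x hx]
    simp only [pow_two]
  -- first spatial derivative of P
  have hP1 : ∀ (j : Fin (d+1)), ∀ x ∈ U, Dv (sv j) P x =
      -(Dv w (Dv (sv j) Φ) x + (∑ k, Dv (sv k) Φ x * Dv (sv j) (Dv (sv k) Φ) x)
        + g * ((sv j).2 (Fin.last d))) := by
    intro j x hx
    have e := Dv_congr hU hbern2 hx (sv j)
    rw [e, Dv_neg]
    have d1 : DifferentiableAt ℝ (Dv w Φ) x := dA (sF1 w) hx
    have dk : ∀ k : Fin (d+1),
        DifferentiableAt ℝ (fun r => Dv (sv k) Φ r * Dv (sv k) Φ r) x :=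
      fun k => (dA (sF1 (sv k)) hx).fun_mul (dA (sF1 (sv k)) hx)
    have d2 : DifferentiableAt ℝ (fun r => ∑ k, Dv (sv k) Φ r * Dv (sv k) Φ r) x :=
      DifferentiableAt.fun_sum fun k _ => dk k
    have d2' : DifferentiableAt ℝ
        (fun r => (1:ℝ)/2 * ∑ k, Dv (sv k) Φ r * Dv (sv k) Φ r) x := d2.const_mul _
    rw [Dv_add (d1.fun_add d2') (hLdiff x), Dv_add d1 d2', Dv_const_mul d2,
      Dv_sum (fun k _ => dk k), hLd]
    rw [Dv_comm hU hΦ hx (sv j) w]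
    have hm : ∀ k : Fin (d+1),
        Dv (sv j) (fun r => Dv (sv k) Φ r * Dv (sv k) Φ r) x
          = Dv (sv j) (Dv (sv k) Φ) x * Dv (sv k) Φ x
            + Dv (sv k) Φ x * Dv (sv j) (Dv (sv k) Φ) x :=
      fun k => Dv_mul (dA (sF1 (sv k)) hx) (dA (sF1 (sv k)) hx) (sv j)
    rw [Finset.sum_congr rfl fun k _ => hm k]
    have hs : (1:ℝ)/2 * ∑ k, (Dv (sv j) (Dv (sv k) Φ) x * Dv (sv k) Φ x
          + Dv (sv k) Φ x * Dv (sv j) (Dv (sv k) Φ) x)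
        = ∑ k, Dv (sv k) Φ x * Dv (sv j) (Dv (sv k) Φ) x := by
      rw [Finset.mul_sum]
      exact Finset.sum_congr rfl fun k _ => by ring
    rw [hs]
  -- second spatial derivatives of P
  have hP2 : ∀ (i j : Fin (d+1)), ∀ x ∈ U, Dv (sv i) (Dv (sv j) P) x =
      -(Dv w (Dv (sv i) (Dv (sv j) Φ)) x
        + ∑ k, (Dv (sv i) (Dv (sv k) Φ) x * Dv (sv j) (Dv (sv k) Φ) x
            + Dv (sv k) Φ x * Dv (sv i) (Dv (sv j) (Dv (sv k) Φ)) x)) := by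
    intro i j x hx
    have e := Dv_congr hU (hP1 j) hx (sv i)
    rw [e, Dv_neg]
    have d1 : DifferentiableAt ℝ (Dv w (Dv (sv j) Φ)) x := dA (sF2 w (sv j)) hx
    have dk : ∀ k : Fin (d+1), DifferentiableAt ℝ
        (fun r => Dv (sv k) Φ r * Dv (sv j) (Dv (sv k) Φ) r) x :=
      fun k => (dA (sF1 (sv k)) hx).fun_mul (dA (sF2 (sv j) (sv k)) hx)
    have d2 : DifferentiableAt ℝ
        (fun r => ∑ k, Dv (sv k) Φ r * Dv (sv j) (Dv (sv k) Φ) r) x :=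
      DifferentiableAt.fun_sum fun k _ => dk k
    rw [Dv_add (d1.fun_add d2) (differentiableAt_const _), Dv_add d1 d2,
      Dv_const (g * ((sv j).2 (Fin.last d))) (sv i), Dv_sum (fun k _ => dk k)]
    rw [Dv_comm3_12 hU hΦ hx (sv i) w (sv j)]
    have hm : ∀ k : Fin (d+1),
        Dv (sv i) (fun r => Dv (sv k) Φ r * Dv (sv j) (Dv (sv k) Φ) r) x
          = Dv (sv i) (Dv (sv k) Φ) x * Dv (sv j) (Dv (sv k) Φ) x
            + Dv (sv k) Φ x * Dv (sv i) (Dv (sv j) (Dv (sv k) Φ)) x :=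
      fun k => Dv_mul (dA (sF1 (sv k)) hx) (dA (sF2 (sv j) (sv k)) hx) (sv i)
    rw [Finset.sum_congr rfl fun k _ => hm k]
    ring
  -- Laplacian of P
  have hDP : ∀ x ∈ U, ∑ i, Dv (sv i) (Dv (sv i) P) x
      = -∑ j, ∑ k, Dv (sv j) (Dv (sv k) Φ) x * Dv (sv j) (Dv (sv k) Φ) x := by
    intro x hx
    rw [Finset.sum_congr rfl fun i _ => hP2 i i x hx]
    have h1 : ∑ i, Dv w (Dv (sv i) (Dv (sv i) Φ)) x = 0 := hH1 w x hx
    have h2 : ∑ i : Fin (d+1), ∑ k, Dv (sv k) Φ x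
        * Dv (sv i) (Dv (sv i) (Dv (sv k) Φ)) x = 0 := by
      rw [Finset.sum_comm]
      refine Finset.sum_eq_zero fun k _ => ?_
      rw [← Finset.mul_sum, hH2 k x hx, mul_zero]
    simp only [neg_add, Finset.sum_add_distrib, Finset.sum_neg_distrib]
    rw [h1, h2]
    ring
  -- derivative of the Laplacian of P in any direction
  have hdDP : ∀ (u : ℝ × Vd (d+1)), ∀ x ∈ U,
      Dv u (fun r => ∑ i, Dv (sv i) (Dv (sv i) P) r) x
        = -∑ j, ∑ k, 2 * Dv (sv j) (Dv (sv k) Φ) x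
            * Dv u (Dv (sv j) (Dv (sv k) Φ)) x := by
    intro u x hx
    have e := Dv_congr hU
      (g := fun r => -∑ j, ∑ k, Dv (sv j) (Dv (sv k) Φ) r * Dv (sv j) (Dv (sv k) Φ) r)
      hDP hx u
    rw [e, Dv_neg, Dv_sum (fun j _ => DifferentiableAt.fun_sum fun k _ =>
      (dA (sF2 (sv j) (sv k)) hx).fun_mul (dA (sF2 (sv j) (sv k)) hx))]
    have hj : ∀ j : Fin (d+1),
        Dv u (fun r => ∑ k, Dv (sv j) (Dv (sv k) Φ) r * Dv (sv j) (Dv (sv k) Φ) r) x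
          = ∑ k, 2 * Dv (sv j) (Dv (sv k) Φ) x * Dv u (Dv (sv j) (Dv (sv k) Φ)) x := by
      intro j
      rw [Dv_sum (fun k _ => (dA (sF2 (sv j) (sv k)) hx).fun_mul (dA (sF2 (sv j) (sv k)) hx))]
      refine Finset.sum_congr rfl fun k _ => ?_
      rw [Dv_mul (dA (sF2 (sv j) (sv k)) hx) (dA (sF2 (sv j) (sv k)) hx)]
      ring
    rw [Finset.sum_congr rfl fun j _ => hj j]
  -- first derivative of the material derivative of P
  have G1 : ∀ (i : Fin (d+1)), ∀ x ∈ U,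
      Dv (sv i) (fun r => Dv w P r + ∑ j, Dv (sv j) Φ r * Dv (sv j) P r) x
        = Dv (sv i) (Dv w P) x + ∑ j, (Dv (sv i) (Dv (sv j) Φ) x * Dv (sv j) P x
            + Dv (sv j) Φ x * Dv (sv i) (Dv (sv j) P) x) := by
    intro i x hx
    have dk : ∀ j : Fin (d+1),
        DifferentiableAt ℝ (fun r => Dv (sv j) Φ r * Dv (sv j) P r) x :=
      fun j => (dA (sF1 (sv j)) hx).fun_mul (dA (sP1 (sv j)) hx)
    rw [Dv_add (dA (sP1 w) hx) (DifferentiableAt.fun_sum fun j _ => dk j),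
      Dv_sum (fun j _ => dk j)]
    congr 1
    exact Finset.sum_congr rfl fun j _ =>
      Dv_mul (dA (sF1 (sv j)) hx) (dA (sP1 (sv j)) hx) (sv i)
  intro q hq
  -- second derivative of the material derivative of P, at q
  have G2 : ∀ i : Fin (d+1),
      Dv (sv i) (Dv (sv i) (fun r => Dv w P r + ∑ j, Dv (sv j) Φ r * Dv (sv j) P r)) q
        = Dv (sv i) (Dv (sv i) (Dv w P)) q
          + ∑ j, (Dv (sv i) (Dv (sv i) (Dv (sv j) Φ)) q * Dv (sv j) P q
              + Dv (sv i) (Dv (sv j) Φ) q * Dv (sv i) (Dv (sv j) P) q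
              + (Dv (sv i) (Dv (sv j) Φ) q * Dv (sv i) (Dv (sv j) P) q
                + Dv (sv j) Φ q * Dv (sv i) (Dv (sv i) (Dv (sv j) P)) q)) := by
    intro i
    have e := Dv_congr hU (G1 i) hq (sv i)
    rw [e]
    have d1 : DifferentiableAt ℝ (Dv (sv i) (Dv w P)) q := dA (sP2 (sv i) w) hq
    have dk : ∀ j : Fin (d+1), DifferentiableAt ℝ
        (fun r => Dv (sv i) (Dv (sv j) Φ) r * Dv (sv j) P r
          + Dv (sv j) Φ r * Dv (sv i) (Dv (sv j) P) r) q :=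
      fun j => ((dA (sF2 (sv i) (sv j)) hq).fun_mul (dA (sP1 (sv j)) hq)).fun_add
        ((dA (sF1 (sv j)) hq).fun_mul (dA (sP2 (sv i) (sv j)) hq))
    rw [Dv_add d1 (DifferentiableAt.fun_sum fun j _ => dk j),
      Dv_sum (fun j _ => dk j)]
    congr 1
    refine Finset.sum_congr rfl fun j _ => ?_
    rw [Dv_add ((dA (sF2 (sv i) (sv j)) hq).fun_mul (dA (sP1 (sv j)) hq))
        ((dA (sF1 (sv j)) hq).fun_mul (dA (sP2 (sv i) (sv j)) hq)),
      Dv_mul (dA (sF2 (sv i) (sv j)) hq) (dA (sP1 (sv j)) hq),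
      Dv_mul (dA (sF1 (sv j)) hq) (dA (sP2 (sv i) (sv j)) hq)]
  -- T1 : Laplacian of the time derivative of P
  have hT1 : ∑ i, Dv (sv i) (Dv (sv i) (Dv w P)) q
      = -∑ j, ∑ k, 2 * Dv (sv j) (Dv (sv k) Φ) q * Dv w (Dv (sv j) (Dv (sv k) Φ)) q := by
    have e : ∀ i : Fin (d+1), Dv (sv i) (Dv (sv i) (Dv w P)) q
        = Dv w (Dv (sv i) (Dv (sv i) P)) q := by
      intro i
      rw [Dv_comm3_23 hU hP hq (sv i) (sv i) w, Dv_comm3_12 hU hP hq (sv i) w (sv i)]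
    rw [Finset.sum_congr rfl fun i _ => e i,
      ← Dv_sum (fun i _ => dA (sP2 (sv i) (sv i)) hq) w, hdDP w q hq]
  -- T4 : Laplacian of spatial derivatives of P
  have hT4 : ∀ j : Fin (d+1), ∑ i, Dv (sv i) (Dv (sv i) (Dv (sv j) P)) q
      = -∑ m, ∑ k, 2 * Dv (sv m) (Dv (sv k) Φ) q
          * Dv (sv j) (Dv (sv m) (Dv (sv k) Φ)) q := by
    intro j
    have e : ∀ i : Fin (d+1), Dv (sv i) (Dv (sv i) (Dv (sv j) P)) q
        = Dv (sv j) (Dv (sv i) (Dv (sv i) P)) q := by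
      intro i
      rw [Dv_comm3_23 hU hP hq (sv i) (sv i) (sv j),
        Dv_comm3_12 hU hP hq (sv i) (sv j) (sv i)]
    rw [Finset.sum_congr rfl fun i _ => e i,
      ← Dv_sum (fun i _ => dA (sP2 (sv i) (sv i)) hq) (sv j), hdDP (sv j) q hq]
  -- key pointwise identity from Bernoulli + symmetry of third derivatives
  have key : ∀ j k : Fin (d+1),
      Dv w (Dv (sv j) (Dv (sv k) Φ)) q
          + ∑ m, Dv (sv m) Φ q * Dv (sv m) (Dv (sv j) (Dv (sv k) Φ)) q
        = -(Dv (sv j) (Dv (sv k) P) q)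
          - ∑ m, Dv (sv j) (Dv (sv m) Φ) q * Dv (sv k) (Dv (sv m) Φ) q := by
    intro j k
    have h1 := hP2 j k q hq
    have h2 : ∀ m : Fin (d+1), Dv (sv m) (Dv (sv j) (Dv (sv k) Φ)) q
        = Dv (sv j) (Dv (sv k) (Dv (sv m) Φ)) q := fun m => hC3 (sv m) (sv j) (sv k) q hq
    rw [Finset.sum_congr rfl fun m _ => by rw [h2 m]]
    rw [Finset.sum_add_distrib] at h1
    linarith [h1]
  -- now assemble everything
  rw [Finset.sum_congr rfl fun i _ => G2 i]
  simp only [Finset.sum_add_distrib]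
  rw [hT1]
  have z1 : ∑ i : Fin (d+1), ∑ j, Dv (sv i) (Dv (sv i) (Dv (sv j) Φ)) q
      * Dv (sv j) P q = 0 := by
    rw [Finset.sum_comm]
    refine Finset.sum_eq_zero fun j _ => ?_
    rw [← Finset.sum_mul, hH2 j q hq, zero_mul]
  rw [z1]
  have z2 : ∑ i : Fin (d+1), ∑ j, Dv (sv j) Φ q
        * Dv (sv i) (Dv (sv i) (Dv (sv j) P)) q
      = -∑ j, ∑ m, ∑ k, 2 * (Dv (sv m) (Dv (sv k) Φ) q
          * (Dv (sv j) Φ q * Dv (sv j) (Dv (sv m) (Dv (sv k) Φ)) q)) := by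
    rw [Finset.sum_comm]
    have hj : ∀ j : Fin (d+1), ∑ i, Dv (sv j) Φ q
          * Dv (sv i) (Dv (sv i) (Dv (sv j) P)) q
        = -∑ m, ∑ k, 2 * (Dv (sv m) (Dv (sv k) Φ) q
            * (Dv (sv j) Φ q * Dv (sv j) (Dv (sv m) (Dv (sv k) Φ)) q)) := by
      intro j
      rw [← Finset.mul_sum, hT4 j, mul_neg, Finset.mul_sum]
      refine neg_inj.mpr (Finset.sum_congr rfl fun m _ => ?_)
      rw [Finset.mul_sum]
      exact Finset.sum_congr rfl fun k _ => by ring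
    rw [Finset.sum_congr rfl fun j _ => hj j, Finset.sum_neg_distrib]
  rw [z2]
  -- abbreviation-free final algebra
  have hcomb : (∑ j, ∑ k, 2 * Dv (sv j) (Dv (sv k) Φ) q * Dv w (Dv (sv j) (Dv (sv k) Φ)) q)
      + (∑ j, ∑ m, ∑ k, 2 * (Dv (sv m) (Dv (sv k) Φ) q
          * (Dv (sv j) Φ q * Dv (sv j) (Dv (sv m) (Dv (sv k) Φ)) q)))
    = (∑ j, ∑ k, (-2 : ℝ) * (Dv (sv j) (Dv (sv k) Φ) q * Dv (sv j) (Dv (sv k) P) q))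
      + (∑ j, ∑ k, ∑ m, (-2 : ℝ) * (Dv (sv j) (Dv (sv k) Φ) q
          * (Dv (sv j) (Dv (sv m) Φ) q * Dv (sv k) (Dv (sv m) Φ) q))) := by
    have e1 : (∑ j, ∑ m, ∑ k, 2 * (Dv (sv m) (Dv (sv k) Φ) q
          * (Dv (sv j) Φ q * Dv (sv j) (Dv (sv m) (Dv (sv k) Φ)) q)))
        = ∑ j, ∑ k, (2 * Dv (sv j) (Dv (sv k) Φ) q)
            * ∑ m, Dv (sv m) Φ q * Dv (sv m) (Dv (sv j) (Dv (sv k) Φ)) q := by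
      rw [Finset.sum_comm]
      refine Finset.sum_congr rfl fun j _ => ?_
      rw [Finset.sum_comm]
      refine Finset.sum_congr rfl fun k _ => ?_
      rw [Finset.mul_sum]
      exact Finset.sum_congr rfl fun m _ => by ring
    calc (∑ j, ∑ k, 2 * Dv (sv j) (Dv (sv k) Φ) q * Dv w (Dv (sv j) (Dv (sv k) Φ)) q)
          + (∑ j, ∑ m, ∑ k, 2 * (Dv (sv m) (Dv (sv k) Φ) q
              * (Dv (sv j) Φ q * Dv (sv j) (Dv (sv m) (Dv (sv k) Φ)) q)))
        = ∑ j, ∑ k, (2 * Dv (sv j) (Dv (sv k) Φ) q)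
            * (Dv w (Dv (sv j) (Dv (sv k) Φ)) q
              + ∑ m, Dv (sv m) Φ q * Dv (sv m) (Dv (sv j) (Dv (sv k) Φ)) q) := by
          rw [e1, ← Finset.sum_add_distrib]
          refine Finset.sum_congr rfl fun j _ => ?_
          rw [← Finset.sum_add_distrib]
          exact Finset.sum_congr rfl fun k _ => by ring
      _ = ∑ j, ∑ k, (2 * Dv (sv j) (Dv (sv k) Φ) q)
            * (-(Dv (sv j) (Dv (sv k) P) q)
              - ∑ m, Dv (sv j) (Dv (sv m) Φ) q * Dv (sv k) (Dv (sv m) Φ) q) := by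
          refine Finset.sum_congr rfl fun j _ => Finset.sum_congr rfl fun k _ => ?_
          rw [key j k]
      _ = ∑ j, ∑ k, ((-2 : ℝ) * (Dv (sv j) (Dv (sv k) Φ) q * Dv (sv j) (Dv (sv k) P) q)
            + ∑ m, (-2 : ℝ) * (Dv (sv j) (Dv (sv k) Φ) q
                * (Dv (sv j) (Dv (sv m) Φ) q * Dv (sv k) (Dv (sv m) Φ) q))) := by
          refine Finset.sum_congr rfl fun j _ => Finset.sum_congr rfl fun k _ => ?_
          rw [show (∑ m, (-2 : ℝ) * (Dv (sv j) (Dv (sv k) Φ) q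
                * (Dv (sv j) (Dv (sv m) Φ) q * Dv (sv k) (Dv (sv m) Φ) q)))
              = ((-2 : ℝ) * Dv (sv j) (Dv (sv k) Φ) q)
                * ∑ m, Dv (sv j) (Dv (sv m) Φ) q * Dv (sv k) (Dv (sv m) Φ) q from by
            rw [Finset.mul_sum]
            exact Finset.sum_congr rfl fun m _ => by ring]
          ring
      _ = _ := by simp only [Finset.sum_add_distrib]
  have hS1 : (∑ j, ∑ k, (-2 : ℝ) * (Dv (sv j) (Dv (sv k) Φ) q * Dv (sv j) (Dv (sv k) P) q))
      = -2 * ∑ i, ∑ j, Dv (sv i) (Dv (sv j) Φ) q * Dv (sv i) (Dv (sv j) P) q := by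
    simp only [Finset.mul_sum]
  have hS3 : (∑ j, ∑ k, ∑ m, (-2 : ℝ) * (Dv (sv j) (Dv (sv k) Φ) q
        * (Dv (sv j) (Dv (sv m) Φ) q * Dv (sv k) (Dv (sv m) Φ) q)))
      = -2 * ∑ i, ∑ j, ∑ k, Dv (sv i) (Dv (sv j) Φ) q * Dv (sv i) (Dv (sv k) Φ) q
          * Dv (sv j) (Dv (sv k) Φ) q := by
    simp only [Finset.mul_sum]
    exact Finset.sum_congr rfl fun j _ => Finset.sum_congr rfl fun k _ =>
      Finset.sum_congr rfl fun m _ => by ring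
  linarith [hcomb, hS1, hS3]


end
end

section
/- Let $\phi$ be smooth with $\Delta_{x,y}\phi = 0$ on an open set of $\mathbf{R}^{d+1}$. Then $\sum_{i,j,k}(\partial_i\partial_j\phi)(\partial_i\partial_k\phi)(\partial_j\partial_k\phi) = \sum_{i,j,k}\partial_i\big((\partial_j\phi)(\partial_i\partial_k\phi)(\partial_j\partial_k\phi)\big) - \frac12\,\mathrm{div}\big(|\nabla^2\phi|^2\,\nabla\phi\big)$, where all indices run over the $d+1$ coordinates and $|\nabla^2\phi|^2 = \sum_{i,k}(\partial_i\partial_k\phi)^2$. -/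
open MeasureTheory Real

noncomputable section

/-- Partial derivative `∂_i`. -/
def pD {n : ℕ} (i : Fin n) (f : Vd n → ℝ) : Vd n → ℝ :=
  fun p => fderiv ℝ f p (EuclideanSpace.single i 1)

section Aux

variable {n : ℕ}

lemma contDiffAt_pd {f : Vd n → ℝ} {p : Vd n} (hf : ContDiffAt ℝ (⊤ : ℕ∞) f p) (i : Fin n) :
    ContDiffAt ℝ (⊤ : ℕ∞) (pD i f) p := by
  have h1 : ContDiffAt ℝ (⊤ : ℕ∞) (fderiv ℝ f) p := hf.fderiv_right (by simp)
  exact ((ContinuousLinearMap.apply ℝ ℝ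
    (EuclideanSpace.single i (1:ℝ))).contDiff.contDiffAt).comp p h1

lemma pd_congr {f g : Vd n → ℝ} {U : Set (Vd n)} (hU : IsOpen U) (h : ∀ q ∈ U, f q = g q)
    {p : Vd n} (hp : p ∈ U) (i : Fin n) : pD i f p = pD i g p := by
  unfold pD
  rw [Filter.EventuallyEq.fderiv_eq (by filter_upwards [hU.mem_nhds hp] with q hq using h q hq)]

lemma pd_mul {f g : Vd n → ℝ} {p : Vd n} (hf : DifferentiableAt ℝ f p)
    (hg : DifferentiableAt ℝ g p) (i : Fin n) :
    pD i (fun q => f q * g q) p = pD i f p * g p + f p * pD i g p := by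
  unfold pD
  rw [fderiv_fun_mul hf hg]
  simp [mul_comm]
  ring

lemma pd_sum {ι : Type*} (s : Finset ι) {F : ι → Vd n → ℝ} {p : Vd n}
    (hF : ∀ j ∈ s, DifferentiableAt ℝ (F j) p) (i : Fin n) :
    pD i (fun q => ∑ j ∈ s, F j q) p = ∑ j ∈ s, pD i (F j) p := by
  unfold pD
  rw [fderiv_fun_sum hF]
  simp

lemma pd_comm {f : Vd n → ℝ} {p : Vd n} (hf : ContDiffAt ℝ (⊤ : ℕ∞) f p) (i j : Fin n) :
    pD i (pD j f) p = pD j (pD i f) p := by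
  have hsymm : IsSymmSndFDerivAt ℝ f p := hf.isSymmSndFDerivAt (by rw [minSmoothness_of_isRCLikeNormedField]; exact WithTop.coe_le_coe.mpr (le_top : (2 : ℕ∞) ≤ ⊤))
  have hd : DifferentiableAt ℝ (fderiv ℝ f) p :=
    (hf.fderiv_right (m := (⊤ : ℕ∞)) (by simp)).differentiableAt (by simp)
  have key : ∀ a b : Fin n, pD a (pD b f) p =
      fderiv ℝ (fderiv ℝ f) p (EuclideanSpace.single a 1) (EuclideanSpace.single b 1) := by
    intro a b
    show fderiv ℝ (fun q => (fderiv ℝ f q) (EuclideanSpace.single b 1)) p _ = _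
    rw [fderiv_clm_apply hd (differentiableAt_const _)]
    simp
  rw [key, key, hsymm]

lemma pd_mul3 {f g h : Vd n → ℝ} {p : Vd n} (hf : DifferentiableAt ℝ f p)
    (hg : DifferentiableAt ℝ g p) (hh : DifferentiableAt ℝ h p) (i : Fin n) :
    pD i (fun q => f q * g q * h q) p =
      pD i f p * g p * h p + f p * pD i g p * h p + f p * g p * pD i h p := by
  have h1 : pD i (fun q => (f q * g q) * h q) p
      = pD i (fun q => f q * g q) p * h p + (f p * g p) * pD i h p :=
    pd_mul (hf.mul hg) hh i
  rw [h1, pd_mul hf hg i]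
  ring

lemma key_algebra {m : ℕ} (A : Fin m → Fin m → ℝ) (B : Fin m → ℝ)
    (C : Fin m → Fin m → Fin m → ℝ)
    (hCs : ∀ i j k, C i j k = C j i k)
    (h0 : (∑ i, A i i) = 0) (h3 : ∀ k, (∑ i, C i i k) = 0) :
    (∑ i, ∑ j, ∑ k, A i j * A i k * A j k) =
      (∑ i, ∑ j, ∑ k,
        (A i j * A i k * A j k + B j * C i i k * A j k + B j * A i k * C i j k)) -
        (1/2) * ∑ i, ((∑ a, ∑ b, 2 * A a b * C i a b) * B i
          + (∑ a, ∑ b, (A a b)^2) * A i i) := by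
  have t2 : (∑ i, ∑ j, ∑ k, B j * C i i k * A j k) = 0 := by
    rw [Finset.sum_comm]
    refine Finset.sum_eq_zero fun j _ => ?_
    rw [Finset.sum_comm]
    refine Finset.sum_eq_zero fun k _ => ?_
    calc (∑ i, B j * C i i k * A j k) = (∑ i, C i i k) * (B j * A j k) := by
          rw [Finset.sum_mul]; exact Finset.sum_congr rfl fun i _ => by ring
      _ = 0 := by rw [h3 k]; ring
  have t3 : (∑ i, ∑ j, ∑ k, B j * A i k * C i j k)
      = ∑ i, ∑ a, ∑ b, B i * A a b * C i a b := by
    rw [Finset.sum_comm]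
    refine Finset.sum_congr rfl fun i _ => Finset.sum_congr rfl fun a _ =>
      Finset.sum_congr rfl fun b _ => ?_
    rw [hCs a i b]
  have expand : (∑ i, ∑ j, ∑ k,
        (A i j * A i k * A j k + B j * C i i k * A j k + B j * A i k * C i j k))
      = (∑ i, ∑ j, ∑ k, A i j * A i k * A j k)
        + (∑ i, ∑ j, ∑ k, B j * C i i k * A j k)
        + (∑ i, ∑ j, ∑ k, B j * A i k * C i j k) := by
    simp only [← Finset.sum_add_distrib]
  have t5 : ∀ i, (∑ a, ∑ b, 2 * A a b * C i a b) * B i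
      = ∑ a, ∑ b, 2 * (B i * A a b * C i a b) := by
    intro i
    rw [Finset.sum_mul]
    refine Finset.sum_congr rfl fun a _ => ?_
    rw [Finset.sum_mul]
    exact Finset.sum_congr rfl fun b _ => by ring
  have e2 : (∑ i, ((∑ a, ∑ b, 2 * A a b * C i a b) * B i
        + (∑ a, ∑ b, (A a b)^2) * A i i))
      = 2 * (∑ i, ∑ a, ∑ b, B i * A a b * C i a b) := by
    rw [Finset.sum_add_distrib]
    have hz : (∑ i, (∑ a, ∑ b, (A a b)^2) * A i i) = 0 := by
      rw [← Finset.mul_sum, h0, mul_zero]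
    rw [hz, add_zero, Finset.mul_sum]
    refine Finset.sum_congr rfl fun i _ => ?_
    rw [t5 i, Finset.mul_sum]
    refine Finset.sum_congr rfl fun a _ => ?_
    rw [Finset.mul_sum]
  rw [expand, t2, t3, e2]
  ring

end Aux

/-- divergence-form identity for harmonic functions. If `Δφ = 0` on an
open set of `ℝ^{d+1}`, then
`∑_{i,j,k}(∂_i∂_jφ)(∂_i∂_kφ)(∂_j∂_kφ)
  = ∑_{i,j,k}∂_i((∂_jφ)(∂_i∂_kφ)(∂_j∂_kφ)) - ½ div(|∇²φ|² ∇φ)`. -/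
theorem harmonic_cubic_divergence (d : ℕ) (φ : Vd (d + 1) → ℝ)
    (U : Set (Vd (d + 1))) (hU : IsOpen U) (hφ : ContDiffOn ℝ (⊤ : ℕ∞) φ U)
    (hharm : ∀ p ∈ U, ∑ i, pD i (pD i φ) p = 0) :
    ∀ p ∈ U,
      (∑ i, ∑ j, ∑ k, pD i (pD j φ) p * pD i (pD k φ) p * pD j (pD k φ) p) =
        (∑ i, ∑ j, ∑ k, pD i (fun q => pD j φ q * pD i (pD k φ) q * pD j (pD k φ) q) p) -
          (1 / 2) *
            ∑ i, pD i (fun q => (∑ a, ∑ b, (pD a (pD b φ) q) ^ 2) * pD i φ q) p := by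
  intro p hp
  have hsm : ∀ q ∈ U, ContDiffAt ℝ (⊤ : ℕ∞) φ q := fun q hq => hφ.contDiffAt (hU.mem_nhds hq)
  have hs1 : ∀ (j : Fin (d+1)), ∀ q ∈ U, ContDiffAt ℝ (⊤ : ℕ∞) (pD j φ) q :=
    fun j q hq => contDiffAt_pd (hsm q hq) j
  have hs2 : ∀ (i j : Fin (d+1)), ∀ q ∈ U, ContDiffAt ℝ (⊤ : ℕ∞) (pD i (pD j φ)) q :=
    fun i j q hq => contDiffAt_pd (hs1 j q hq) i
  -- third derivatives of the harmonic equation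
  have harm3 : ∀ k : Fin (d+1), (∑ i, pD i (pD i (pD k φ)) p) = 0 := by
    intro k
    have e1 : pD k (fun q => ∑ i, pD i (pD i φ) q) p = pD k (fun _ => (0:ℝ)) p :=
      pd_congr hU hharm hp k
    have e2 : pD k (fun _ : Vd (d+1) => (0:ℝ)) p = 0 := by
      unfold pD; simp
    have e3 : pD k (fun q => ∑ i, pD i (pD i φ) q) p = ∑ i, pD k (pD i (pD i φ)) p :=
      pd_sum Finset.univ
        (fun i _ => (contDiffAt_pd (hs1 i p hp) i).differentiableAt (by simp)) k
    have e4 : ∀ i : Fin (d+1), pD k (pD i (pD i φ)) p = pD i (pD i (pD k φ)) p := by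
      intro i
      have c1 : pD k (pD i (pD i φ)) p = pD i (pD k (pD i φ)) p :=
        pd_comm (hs1 i p hp) k i
      have c2 : pD i (pD k (pD i φ)) p = pD i (pD i (pD k φ)) p :=
        pd_congr hU (fun q hq => pd_comm (hsm q hq) k i) hp i
      rw [c1, c2]
    calc (∑ i, pD i (pD i (pD k φ)) p) = ∑ i, pD k (pD i (pD i φ)) p :=
          Finset.sum_congr rfl fun i _ => (e4 i).symm
      _ = pD k (fun q => ∑ i, pD i (pD i φ) q) p := e3.symm
      _ = 0 := e1.trans e2
  -- expansion of the first divergence term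
  have hExp1 : ∀ i j k : Fin (d+1),
      pD i (fun q => pD j φ q * pD i (pD k φ) q * pD j (pD k φ) q) p
      = pD i (pD j φ) p * pD i (pD k φ) p * pD j (pD k φ) p
        + pD j φ p * pD i (pD i (pD k φ)) p * pD j (pD k φ) p
        + pD j φ p * pD i (pD k φ) p * pD i (pD j (pD k φ)) p := fun i j k =>
    pd_mul3 ((hs1 j p hp).differentiableAt (by simp)) ((hs2 i k p hp).differentiableAt (by simp))
      ((hs2 j k p hp).differentiableAt (by simp)) i
  -- expansion of the second divergence term
  have hExp2 : ∀ i : Fin (d+1),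
      pD i (fun q => (∑ a, ∑ b, (pD a (pD b φ) q) ^ 2) * pD i φ q) p
      = (∑ a, ∑ b, 2 * pD a (pD b φ) p * pD i (pD a (pD b φ)) p) * pD i φ p
        + (∑ a, ∑ b, (pD a (pD b φ) p) ^ 2) * pD i (pD i φ) p := by
    intro i
    have hSd : DifferentiableAt ℝ (fun q => ∑ a, ∑ b, (pD a (pD b φ) q) ^ 2) p := by
      apply DifferentiableAt.fun_sum; intro a _
      apply DifferentiableAt.fun_sum; intro b _
      exact ((hs2 a b p hp).differentiableAt (by simp)).pow 2
    have e0 : pD i (fun q => (∑ a, ∑ b, (pD a (pD b φ) q) ^ 2) * pD i φ q) p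
        = pD i (fun q => ∑ a, ∑ b, (pD a (pD b φ) q) ^ 2) p * pD i φ p
          + (∑ a, ∑ b, (pD a (pD b φ) p) ^ 2) * pD i (pD i φ) p :=
      pd_mul hSd ((hs1 i p hp).differentiableAt (by simp)) i
    have e1 : pD i (fun q => ∑ a, ∑ b, (pD a (pD b φ) q) ^ 2) p
        = ∑ a, ∑ b, 2 * pD a (pD b φ) p * pD i (pD a (pD b φ)) p := by
      have eA : pD i (fun q => ∑ a, ∑ b, (pD a (pD b φ) q) ^ 2) p
          = ∑ a, pD i (fun q => ∑ b, (pD a (pD b φ) q) ^ 2) p :=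
        pd_sum Finset.univ (fun a _ => by
          apply DifferentiableAt.fun_sum; intro b _
          exact ((hs2 a b p hp).differentiableAt (by simp)).pow 2) i
      rw [eA]
      refine Finset.sum_congr rfl fun a _ => ?_
      have eB : pD i (fun q => ∑ b, (pD a (pD b φ) q) ^ 2) p
          = ∑ b, pD i (fun q => (pD a (pD b φ) q) ^ 2) p :=
        pd_sum Finset.univ (fun b _ => ((hs2 a b p hp).differentiableAt (by simp)).pow 2) i
      rw [eB]
      refine Finset.sum_congr rfl fun b _ => ?_
      have hsq : (fun q => (pD a (pD b φ) q) ^ 2)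
          = fun q => pD a (pD b φ) q * pD a (pD b φ) q := by
        funext q; ring
      rw [hsq, pd_mul ((hs2 a b p hp).differentiableAt (by simp))
        ((hs2 a b p hp).differentiableAt (by simp)) i]
      ring
    rw [e0, e1]
  have R1 : (∑ i, ∑ j, ∑ k,
        pD i (fun q => pD j φ q * pD i (pD k φ) q * pD j (pD k φ) q) p)
      = ∑ i, ∑ j, ∑ k,
        (pD i (pD j φ) p * pD i (pD k φ) p * pD j (pD k φ) p
          + pD j φ p * pD i (pD i (pD k φ)) p * pD j (pD k φ) p
          + pD j φ p * pD i (pD k φ) p * pD i (pD j (pD k φ)) p) :=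
    Finset.sum_congr rfl fun i _ => Finset.sum_congr rfl fun j _ =>
      Finset.sum_congr rfl fun k _ => hExp1 i j k
  have R2 : (∑ i, pD i (fun q => (∑ a, ∑ b, (pD a (pD b φ) q) ^ 2) * pD i φ q) p)
      = ∑ i, ((∑ a, ∑ b, 2 * pD a (pD b φ) p * pD i (pD a (pD b φ)) p) * pD i φ p
        + (∑ a, ∑ b, (pD a (pD b φ) p) ^ 2) * pD i (pD i φ) p) :=
    Finset.sum_congr rfl fun i _ => hExp2 i
  rw [R1, R2]
  exact key_algebra (fun i j => pD i (pD j φ) p) (fun j => pD j φ p)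
    (fun i j k => pD i (pD j (pD k φ)) p)
    (fun i j k => pd_comm (contDiffAt_pd (hsm p hp) k) i j)
    (hharm p hp) harm3

end
end
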